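/- The evidential negative log-likelihood loss equals the negative logarithm of the NIG model evidence: for any y, δ ∈ ℝ, γ > 0, α > 0, β > 0, setting Ω = 2β(1+γ) and Ψ = Γ(α)/Γ(α+1/2), the negative logarithm of the double Lebesgue integral over s ∈ (0,∞) and μ ∈ ℝ of the Gaussian likelihood (1/√(2πs)) · exp(−(y−μ)²/(2s)) times the NIG density p(μ,s) = (β^α/Γ(α)) · (√γ/√(2πs)) · s^{−(α+1)} · exp(−(2β+γ(δ−μ)²)/(2s)) equals (1/2)·log(π/γ) − α·log(Ω) + (α+1/2)·log((y−δ)²γ + Ω) + log(Ψ). -/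

import Mathlib

/-!
Completing the square in `μ` turns the likelihood times the NIG density into a Gaussian in `μ`
of variance `s / (1 + γ)`. Integrating it out leaves the inverse-gamma kernel
`s ^ (-(α + 1/2 + 1)) * exp (-r / s)` with `r = ((y - δ)² γ + Ω) / (2 (1 + γ))`, whose integral is
`Γ(α + 1/2) / r ^ (α + 1/2)`. The evidence is therefore the Student-t density
`√(γ / π) Ω ^ α ((y - δ)² γ + Ω) ^ (-(α + 1/2)) / Ψ`, and the loss is its negative logarithm.
-/

open MeasureTheory

/-- The Normal-Inverse-Gamma (NIG) density with parameters `δ γ α β`, as a function of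
the Gaussian mean `μ` and the Gaussian variance `s = σ²`. -/
noncomputable def nigPdf (δ γ α β μ s : ℝ) : ℝ :=
  (β ^ α / Real.Gamma α) * (Real.sqrt γ / Real.sqrt (2 * Real.pi * s)) *
    s ^ (-(α + 1)) * Real.exp (-(2 * β + γ * (δ - μ) ^ 2) / (2 * s))

/-- The Gaussian likelihood of an observation `y` given mean `μ` and variance `s`. -/
noncomputable def gaussPdf (y μ s : ℝ) : ℝ :=
  (1 / Real.sqrt (2 * Real.pi * s)) * Real.exp (-(y - μ) ^ 2 / (2 * s))

open Real Set

theorem integral_exp_neg_sub_sq_div (c : ℝ) {v : ℝ} (hv : 0 < v) :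
    ∫ x : ℝ, exp (-(x - c) ^ 2 / (2 * v)) = √(2 * π * v) := by
  rw [integral_sub_right_eq_self (fun x => exp (-x ^ 2 / (2 * v))) c,
    show 2 * π * v = π / (1 / (2 * v)) by field_simp, ← integral_gaussian]
  congr with x
  ring_nf

theorem integral_rpow_neg_mul_exp_neg_div_Ioi {a r : ℝ} (ha : 0 < a) (hr : 0 < r) :
    ∫ s in Ioi (0 : ℝ), s ^ (-(a + 1)) * exp (-(r / s)) = Gamma a / r ^ a := by
  -- the substitution `s = t⁻¹` turns this into Euler's integral for `Γ a`
  rw [div_eq_mul_inv, mul_comm, ← inv_rpow hr.le, ← one_div,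
    ← integral_rpow_mul_exp_neg_mul_Ioi ha hr,
    ← integral_comp_rpow_Ioi (fun t => t ^ (a - 1) * exp (-(r * t))) (p := -1) (by norm_num)]
  refine setIntegral_congr_fun measurableSet_Ioi fun s (hs : 0 < s) => ?_
  rw [rpow_neg_one, smul_eq_mul, abs_neg, abs_one, one_mul, inv_rpow hs.le, ← rpow_neg hs.le,
    ← mul_assoc, ← rpow_add hs, div_eq_mul_inv]
  ring_nf

theorem gaussPdf_mul_nigPdf {y δ γ α β s : ℝ} (hγ : 1 + γ ≠ 0) (hs : 0 < s) (μ : ℝ) :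
    gaussPdf y μ s * nigPdf δ γ α β μ s =
      β ^ α / Gamma α * (√γ / (2 * π * s)) * s ^ (-(α + 1)) *
        exp (-(((y - δ) ^ 2 * γ + 2 * β * (1 + γ)) / (2 * (1 + γ)) / s)) *
        exp (-(μ - (y + γ * δ) / (1 + γ)) ^ 2 / (2 * (s / (1 + γ)))) := by
  have hsqrt : √(2 * π * s) * √(2 * π * s) = 2 * π * s := mul_self_sqrt (by positivity)
  have complete_square : -(y - μ) ^ 2 / (2 * s) + -(2 * β + γ * (δ - μ) ^ 2) / (2 * s) =
      -(((y - δ) ^ 2 * γ + 2 * β * (1 + γ)) / (2 * (1 + γ)) / s) +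
        -(μ - (y + γ * δ) / (1 + γ)) ^ 2 / (2 * (s / (1 + γ))) := by
    field_simp
    ring
  calc gaussPdf y μ s * nigPdf δ γ α β μ s
      = β ^ α / Gamma α * (√γ / (√(2 * π * s) * √(2 * π * s))) * s ^ (-(α + 1)) *
          exp (-(y - μ) ^ 2 / (2 * s) + -(2 * β + γ * (δ - μ) ^ 2) / (2 * s)) := by
        rw [exp_add]; unfold gaussPdf nigPdf; ring
    _ = _ := by rw [hsqrt, complete_square, exp_add]; ring

theorem integral_gaussPdf_mul_nigPdf {y δ γ α β s : ℝ} (hγ : 0 < 1 + γ) (hs : 0 < s) :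
    ∫ μ, gaussPdf y μ s * nigPdf δ γ α β μ s =
      β ^ α / Gamma α * (√γ / √(2 * π * (1 + γ))) *
        (s ^ (-(α + 1 / 2 + 1)) *
          exp (-(((y - δ) ^ 2 * γ + 2 * β * (1 + γ)) / (2 * (1 + γ)) / s))) := by
  simp_rw [gaussPdf_mul_nigPdf hγ.ne' hs]
  rw [integral_const_mul, integral_exp_neg_sub_sq_div _ (div_pos hs hγ),
    show -(α + 1 / 2 + 1) = -(α + 1) - 1 / 2 by ring, rpow_sub hs, ← sqrt_eq_rpow,
    show 2 * π * (s / (1 + γ)) = 2 * π * s / (1 + γ) by ring, sqrt_div' _ hγ.le,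
    sqrt_mul' _ hs.le, sqrt_mul' _ hγ.le]
  field_simp
  rw [sq_sqrt (by positivity), sq_sqrt hs.le]
  ring

theorem integral_integral_gaussPdf_mul_nigPdf {y δ γ α β : ℝ} (hγ : 0 ≤ γ)
    (hα : 0 < α + 1 / 2) (hβ : 0 < β) :
    ∫ s in Ioi 0, ∫ μ, gaussPdf y μ s * nigPdf δ γ α β μ s =
      √(γ / π) * (2 * β * (1 + γ)) ^ α * Gamma (α + 1 / 2) / Gamma α /
        ((y - δ) ^ 2 * γ + 2 * β * (1 + γ)) ^ (α + 1 / 2) := by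
  have hc : 0 < 2 * (1 + γ) := by positivity
  have hX : 0 < (y - δ) ^ 2 * γ + 2 * β * (1 + γ) := by positivity
  rw [setIntegral_congr_fun measurableSet_Ioi
      fun s hs => integral_gaussPdf_mul_nigPdf (by linarith) hs,
    integral_const_mul, integral_rpow_neg_mul_exp_neg_div_Ioi hα (div_pos hX hc),
    div_rpow hX.le hc.le, rpow_add hc, ← sqrt_eq_rpow,
    show 2 * β * (1 + γ) = β * (2 * (1 + γ)) by ring, mul_rpow hβ.le hc.le,
    sqrt_div' _ pi_pos.le, show 2 * π * (1 + γ) = π * (2 * (1 + γ)) by ring,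
    sqrt_mul pi_pos.le]
  field_simp

/-- The evidential negative log-likelihood loss equals the negative logarithm of the
NIG model evidence. -/
theorem nigPdf_nll_loss (y δ γ α β : ℝ) (hγ : 0 < γ) (hα : 0 < α) (hβ : 0 < β) :
    let Ω : ℝ := 2 * β * (1 + γ);
    let Ψ : ℝ := Real.Gamma α / Real.Gamma (α + 1 / 2);
    -Real.log (∫ s in Set.Ioi (0 : ℝ), ∫ μ : ℝ, gaussPdf y μ s * nigPdf δ γ α β μ s)
      = (1 / 2) * Real.log (Real.pi / γ) - α * Real.log Ω
          + (α + 1 / 2) * Real.log ((y - δ) ^ 2 * γ + Ω) + Real.log Ψ := by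
  dsimp only
  have hΓ : 0 < Gamma α := Gamma_pos_of_pos hα
  have hΓ' : 0 < Gamma (α + 1 / 2) := Gamma_pos_of_pos (by positivity)
  have hX : 0 < (y - δ) ^ 2 * γ + 2 * β * (1 + γ) := by positivity
  rw [integral_integral_gaussPdf_mul_nigPdf hγ.le (by positivity) hβ,
    log_div (by positivity) (rpow_pos_of_pos hX _).ne', log_div (by positivity) hΓ.ne',
    log_mul (by positivity) hΓ'.ne', log_mul (by positivity) (by positivity),
    log_sqrt (by positivity), log_rpow (by positivity), log_rpow hX,
    log_div hΓ.ne' hΓ'.ne', log_div pi_pos.ne' hγ.ne', log_div hγ.ne' pi_pos.ne']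
  ring
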